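/- arXiv:2307.04126 — 2 statements merged into one kernel-verified Lean document; each statement's English description precedes it below -/
import Mathlib

section
/- Let f be a smooth function on the standard round 2-sphere S² satisfying Δf ≤ f and ‖f‖_{L²(S²)} ≤ C√(2π) for some constant C > 0. Then for every x ∈ S² and all 0 < r < R ≤ π/2, the ball averages satisfy ⨍_{B_R(x)} (f(y) − C d(y,x)) dvol(y) ≤ ⨍_{B_r(x)} (f(y) − C d(y,x)) dvol(y), where d is the geodesic distance on S². -/
open Real MeasureTheory intervalIntegral

/- We work on the unit round sphere `S²` in geodesic polar coordinates `(r, θ)` centered at a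
point `p`.  A smooth function `f` on `S²` is represented by `F : ℝ → ℝ → ℝ`, which is smooth,
`2π`-periodic in `θ`, and constant in `θ` at the poles `r = 0, π`. -/

/-- The Laplace–Beltrami operator on the round `S²` (trace of the Hessian, no negative sign),
in geodesic polar coordinates. -/
noncomputable def sphLap (F : ℝ → ℝ → ℝ) (r θ : ℝ) : ℝ :=
  deriv (fun s => deriv (fun s' => F s' θ) s) r
    + (Real.cos r / Real.sin r) * deriv (fun s => F s θ) r
    + (1 / Real.sin r ^ 2) * deriv (deriv (F r)) θ

/-- The spherical mean `⨍_{∂B_r(p)} f ds = (∫_0^{2π} F(r,θ) dθ) / (2π)` (the circle `∂B_r(p)`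
has length `2π sin r` and line element `sin r dθ`). -/
noncomputable def circleAvg (F : ℝ → ℝ → ℝ) (r : ℝ) : ℝ :=
  (∫ θ in (0:ℝ)..(2*π), F r θ) / (2*π)

/-- The integral of a function over `S²` with the round area element `sin r dr dθ`. -/
noncomputable def sphereIntegral (G : ℝ → ℝ → ℝ) : ℝ :=
  ∫ r in (0:ℝ)..π, ∫ θ in (0:ℝ)..(2*π), G r θ * Real.sin r

/-- The `L²(S²)` norm of a function. -/
noncomputable def sphereL2 (F : ℝ → ℝ → ℝ) : ℝ :=
  Real.sqrt (sphereIntegral (fun r θ => (F r θ)^2))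
/-- The integral of `G` over the geodesic ball `B_r(x)` (area element `sin s ds dθ`; the geodesic
distance from the center `x` to a point with polar coordinates `(s,θ)` is `s`). -/
noncomputable def ballIntegral (G : ℝ → ℝ → ℝ) (r : ℝ) : ℝ :=
  ∫ s in (0:ℝ)..r, ∫ θ in (0:ℝ)..(2*π), G s θ * Real.sin s

/-- The ball average `⨍_{B_r(x)} G`; the ball `B_r(x)` has area `2π(1 − cos r)`. -/
noncomputable def ballAvg (G : ℝ → ℝ → ℝ) (r : ℝ) : ℝ :=
  ballIntegral G r / (2*π*(1 - Real.cos r))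

/-! ### Auxiliary machinery -/

noncomputable def pd (v : ℝ × ℝ) (G : ℝ → ℝ → ℝ) : ℝ → ℝ → ℝ :=
  fun r θ => fderiv ℝ (Function.uncurry G) (r, θ) v

noncomputable def Phi (G : ℝ → ℝ → ℝ) : ℝ → ℝ := fun s => ∫ θ in (0:ℝ)..(2*π), G s θ

lemma contDiff_pd {G : ℝ → ℝ → ℝ} (hG : ContDiff ℝ (⊤ : ℕ∞) (Function.uncurry G)) (v : ℝ × ℝ) :
    ContDiff ℝ (⊤ : ℕ∞) (Function.uncurry (pd v G)) := by
  have h1 : ContDiff ℝ (⊤ : ℕ∞) (fderiv ℝ (Function.uncurry G)) := hG.fderiv_right (by simp)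
  have : Function.uncurry (pd v G) = fun p => (fderiv ℝ (Function.uncurry G) p) v := by
    funext p; rfl
  rw [this]
  exact h1.clm_apply contDiff_const

lemma hasDerivAt_fst {G : ℝ → ℝ → ℝ} (hG : ContDiff ℝ (⊤ : ℕ∞) (Function.uncurry G)) (r θ : ℝ) :
    HasDerivAt (fun s => G s θ) (pd (1,0) G r θ) r := by
  have h := (hG.differentiable (by simp) (r, θ)).hasFDerivAt
  have h2 : HasDerivAt (fun s : ℝ => (s, θ)) ((1:ℝ), (0:ℝ)) r :=
    (hasDerivAt_id r).prodMk (hasDerivAt_const r θ)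
  exact h.comp_hasDerivAt r h2

lemma hasDerivAt_snd {G : ℝ → ℝ → ℝ} (hG : ContDiff ℝ (⊤ : ℕ∞) (Function.uncurry G)) (r θ : ℝ) :
    HasDerivAt (fun t => G r t) (pd (0,1) G r θ) θ := by
  have h := (hG.differentiable (by simp) (r, θ)).hasFDerivAt
  have h2 : HasDerivAt (fun t : ℝ => (r, t)) ((0:ℝ), (1:ℝ)) θ :=
    (hasDerivAt_const θ r).prodMk (hasDerivAt_id θ)
  exact h.comp_hasDerivAt θ h2

lemma deriv_fst {G : ℝ → ℝ → ℝ} (hG : ContDiff ℝ (⊤ : ℕ∞) (Function.uncurry G)) (θ : ℝ) :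
    (fun s => deriv (fun s' => G s' θ) s) = fun s => pd (1,0) G s θ := by
  funext s; exact (hasDerivAt_fst hG s θ).deriv

lemma deriv_snd {G : ℝ → ℝ → ℝ} (hG : ContDiff ℝ (⊤ : ℕ∞) (Function.uncurry G)) (r : ℝ) :
    deriv (G r) = fun t => pd (0,1) G r t := by
  funext t; exact (hasDerivAt_snd hG r t).deriv

lemma cont_slice {G : ℝ → ℝ → ℝ} (hG : Continuous (Function.uncurry G)) (r : ℝ) :
    Continuous (G r) := by
  have : G r = Function.uncurry G ∘ (fun θ => (r, θ)) := rfl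
  rw [this]; exact hG.comp (by continuity)

lemma hasDerivAt_param {G : ℝ → ℝ → ℝ} (hG : ContDiff ℝ (⊤ : ℕ∞) (Function.uncurry G)) (r : ℝ) :
    HasDerivAt (Phi G) (Phi (pd (1,0) G) r) r := by
  have hpd := (contDiff_pd hG (1,0)).continuous
  have hcomp : IsCompact (Set.Icc (r-1) (r+1) ×ˢ Set.uIcc (0:ℝ) (2*π)) :=
    isCompact_Icc.prod isCompact_uIcc
  obtain ⟨M, hM⟩ := hcomp.exists_bound_of_continuousOn (hpd.continuousOn)
  have key := intervalIntegral.hasDerivAt_integral_of_dominated_loc_of_deriv_le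
    (F := fun s θ => G s θ) (F' := fun s θ => pd (1,0) G s θ) (x₀ := r) (a := (0:ℝ)) (b := 2*π)
    (bound := fun _ => M) (s := Metric.ball r 1) (Metric.ball_mem_nhds r one_pos)
    (Filter.Eventually.of_forall fun s => ((cont_slice hG.continuous s)).aestronglyMeasurable)
    ((cont_slice hG.continuous r).intervalIntegrable _ _)
    ((cont_slice hpd r).aestronglyMeasurable)
    (Filter.Eventually.of_forall fun t ht x hx => by
      apply hM (x, t)
      constructor
      · exact Set.mem_Icc.2 ⟨by have := abs_lt.1 (by simpa [Real.dist_eq] using hx); linarith [this.1],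
          by have := abs_lt.1 (by simpa [Real.dist_eq] using hx); linarith [this.2]⟩
      · exact Set.uIoc_subset_uIcc ht)
    (intervalIntegrable_const (μ := volume))
    (Filter.Eventually.of_forall fun t ht x hx => hasDerivAt_fst hG x t)
  exact key.2

lemma continuous_Phi {G : ℝ → ℝ → ℝ} (hG : ContDiff ℝ (⊤ : ℕ∞) (Function.uncurry G)) :
    Continuous (Phi G) := by
  have : Differentiable ℝ (Phi G) := fun r => (hasDerivAt_param hG r).differentiableAt
  exact this.continuous

lemma cs_interval {f g : ℝ → ℝ} (hf : Continuous f) (hg : Continuous g) {a b : ℝ}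
    (hab : a ≤ b) :
    (∫ x in a..b, f x * g x) ^ 2 ≤ (∫ x in a..b, f x ^ 2) * (∫ x in a..b, g x ^ 2) := by
  set A := ∫ x in a..b, f x ^ 2 with hA
  set B := ∫ x in a..b, f x * g x with hB
  set D := ∫ x in a..b, g x ^ 2 with hD
  have key : ∀ t : ℝ, 0 ≤ A * (t * t) + (2 * B) * t + D := by
    intro t
    have h1 : ∀ x, (t * f x + g x) ^ 2
        = t * t * (f x * f x) + 2 * t * (f x * g x) + g x * g x := by intro x; ring
    have h2 : (0:ℝ) ≤ ∫ x in a..b, (t * f x + g x) ^ 2 :=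
      intervalIntegral.integral_nonneg hab (fun x _ => sq_nonneg _)
    have h3 : (∫ x in a..b, (t * f x + g x) ^ 2)
        = t * t * A + 2 * t * B + D := by
      simp_rw [h1]
      rw [intervalIntegral.integral_add
            (f := fun x => t * t * (f x * f x) + 2 * t * (f x * g x)) (g := fun x => g x * g x)
            ((((continuous_const.mul (hf.mul hf)).intervalIntegrable a b).add
              ((continuous_const.mul (hf.mul hg)).intervalIntegrable a b) :
              IntervalIntegrable (fun x => t * t * (f x * f x) + 2 * t * (f x * g x)) volume a b))
            ((hg.mul hg).intervalIntegrable a b : IntervalIntegrable (fun x => g x * g x) volume a b),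
          intervalIntegral.integral_add (f := fun x => t * t * (f x * f x))
            (g := fun x => 2 * t * (f x * g x))
            ((continuous_const.mul (hf.mul hf)).intervalIntegrable a b :
              IntervalIntegrable (fun x => t * t * (f x * f x)) volume a b)
            ((continuous_const.mul (hf.mul hg)).intervalIntegrable a b :
              IntervalIntegrable (fun x => 2 * t * (f x * g x)) volume a b),
          intervalIntegral.integral_const_mul, intervalIntegral.integral_const_mul]
      simp only [pow_two, hA, hB, hD]
    nlinarith [h2, h3]
  have := discrim_le_zero key
  simp only [discrim] at this
  nlinarith [this]

/-- The θθ-term integrates to zero by periodicity. -/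
lemma thetatheta_zero {F : ℝ → ℝ → ℝ} (hF : ContDiff ℝ (⊤ : ℕ∞) (Function.uncurry F))
    (hper : ∀ r, Function.Periodic (F r) (2*π)) (s : ℝ) :
    (∫ θ in (0:ℝ)..(2*π), pd (0,1) (pd (0,1) F) s θ) = 0 := by
  have hF1 : ContDiff ℝ (⊤ : ℕ∞) (Function.uncurry (pd (0,1) F)) := contDiff_pd hF _
  have hrw : (fun θ => pd (0,1) (pd (0,1) F) s θ) = deriv (deriv (F s)) := by
    rw [deriv_snd hF s]
    funext θ; exact ((hasDerivAt_snd hF1 s θ).deriv).symm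
  have hdiff : ∀ x ∈ Set.uIcc (0:ℝ) (2*π), DifferentiableAt ℝ (deriv (F s)) x := by
    intro x _
    rw [deriv_snd hF s]
    exact (hasDerivAt_snd hF1 s x).differentiableAt
  have hint : IntervalIntegrable (deriv (deriv (F s))) volume 0 (2*π) := by
    rw [← hrw]
    exact (cont_slice (contDiff_pd hF1 (0,1)).continuous s).intervalIntegrable _ _
  have := intervalIntegral.integral_deriv_eq_sub hdiff hint
  rw [hrw, this]
  -- deriv (F s) (2π) = deriv (F s) 0 by periodicity
  have h1 : HasDerivAt (fun t => F s (t + 2*π)) (pd (0,1) F s (0 + 2*π) * 1) 0 :=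
    (hasDerivAt_snd hF s (0 + 2*π)).comp 0 ((hasDerivAt_id (0:ℝ)).add_const (2*π))
  have h2 : (fun t => F s (t + 2*π)) = F s := funext fun t => hper s t
  rw [h2] at h1
  have hp : pd (0,1) F s (2*π) = pd (0,1) F s 0 := by
    have := h1.unique (hasDerivAt_snd hF s 0)
    simpa using this
  rw [deriv_snd hF s]
  simp [hp]

/-- Key bound: the derivative of the (unnormalized) circle mean is at most `2πC`. -/
lemma psi_le (F : ℝ → ℝ → ℝ) (C : ℝ) (hC : 0 < C)
    (hF : ContDiff ℝ (⊤ : ℕ∞) (Function.uncurry F))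
    (hper : ∀ r, Function.Periodic (F r) (2*π))
    (hlap : ∀ r ∈ Set.Ioo (0:ℝ) π, ∀ θ, sphLap F r θ ≤ F r θ)
    (hL2 : sphereL2 F ≤ C * Real.sqrt (2*π)) :
    ∀ r ∈ Set.Ioc (0:ℝ) (π/2), Phi (pd (1,0) F) r ≤ 2*π*C := by
  have hF1 : ContDiff ℝ (⊤ : ℕ∞) (Function.uncurry (pd (1,0) F)) := contDiff_pd hF _
  have hΦ : ∀ s, HasDerivAt (Phi F) (Phi (pd (1,0) F) s) s := fun s => hasDerivAt_param hF s
  have hΨ : ∀ s, HasDerivAt (Phi (pd (1,0) F)) (Phi (pd (1,0) (pd (1,0) F)) s) s :=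
    fun s => hasDerivAt_param hF1 s
  have hΦcont : Continuous (Phi F) := continuous_Phi hF
  have hΨcont : Continuous (Phi (pd (1,0) F)) := continuous_Phi hF1
  -- integrated differential inequality
  have hineq : ∀ s ∈ Set.Ioo (0:ℝ) π,
      Real.sin s * Phi (pd (1,0) (pd (1,0) F)) s + Real.cos s * Phi (pd (1,0) F) s
        ≤ Real.sin s * Phi F s := by
    intro s hs
    have hsin : 0 < Real.sin s := Real.sin_pos_of_pos_of_lt_pi hs.1 hs.2
    have h1 : ∀ θ, pd (1,0) (pd (1,0) F) s θ + (Real.cos s / Real.sin s) * pd (1,0) F s θ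
        + (1 / Real.sin s ^ 2) * pd (0,1) (pd (0,1) F) s θ ≤ F s θ := by
      intro θ
      have h := hlap s hs θ
      have e1 : deriv (fun u => deriv (fun u' => F u' θ) u) s = pd (1,0) (pd (1,0) F) s θ := by
        rw [deriv_fst hF θ]; exact (hasDerivAt_fst hF1 s θ).deriv
      have e2 : deriv (fun u => F u θ) s = pd (1,0) F s θ := (hasDerivAt_fst hF s θ).deriv
      have e3 : deriv (deriv (F s)) θ = pd (0,1) (pd (0,1) F) s θ := by
        rw [deriv_snd hF s]; exact (hasDerivAt_snd (contDiff_pd hF (0,1)) s θ).deriv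
      rw [sphLap, e1, e2, e3] at h
      exact h
    have hcont1 : Continuous (fun θ => pd (1,0) (pd (1,0) F) s θ
        + (Real.cos s / Real.sin s) * pd (1,0) F s θ
        + (1 / Real.sin s ^ 2) * pd (0,1) (pd (0,1) F) s θ) :=
      ((cont_slice (contDiff_pd hF1 (1,0)).continuous s).add
        (continuous_const.mul (cont_slice hF1.continuous s))).add
        (continuous_const.mul (cont_slice (contDiff_pd (contDiff_pd hF (0,1)) (0,1)).continuous s))
    have hmono := intervalIntegral.integral_mono_on (μ := volume) (by positivity : (0:ℝ) ≤ 2*π)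
      (hcont1.intervalIntegrable _ _) ((cont_slice hF.continuous s).intervalIntegrable _ _)
      (fun θ _ => h1 θ)
    have hsplit : (∫ θ in (0:ℝ)..(2*π), (pd (1,0) (pd (1,0) F) s θ
        + (Real.cos s / Real.sin s) * pd (1,0) F s θ
        + (1 / Real.sin s ^ 2) * pd (0,1) (pd (0,1) F) s θ))
        = Phi (pd (1,0) (pd (1,0) F)) s + (Real.cos s / Real.sin s) * Phi (pd (1,0) F) s := by
      rw [intervalIntegral.integral_add
            (f := fun θ => pd (1,0) (pd (1,0) F) s θ + (Real.cos s / Real.sin s) * pd (1,0) F s θ)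
            (g := fun θ => (1 / Real.sin s ^ 2) * pd (0,1) (pd (0,1) F) s θ)
            ((((cont_slice (contDiff_pd hF1 (1,0)).continuous s).intervalIntegrable _ _).add
              ((continuous_const.mul (cont_slice hF1.continuous s)).intervalIntegrable _ _) :
              IntervalIntegrable (fun θ => pd (1,0) (pd (1,0) F) s θ
                + (Real.cos s / Real.sin s) * pd (1,0) F s θ) volume 0 (2*π)))
            ((continuous_const.mul
              (cont_slice (contDiff_pd (contDiff_pd hF (0,1)) (0,1)).continuous s)).intervalIntegrable _ _ :
              IntervalIntegrable (fun θ => (1 / Real.sin s ^ 2) * pd (0,1) (pd (0,1) F) s θ) volume 0 (2*π)),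
          intervalIntegral.integral_add
            (f := fun θ => pd (1,0) (pd (1,0) F) s θ)
            (g := fun θ => (Real.cos s / Real.sin s) * pd (1,0) F s θ)
            ((cont_slice (contDiff_pd hF1 (1,0)).continuous s).intervalIntegrable _ _ :
              IntervalIntegrable (fun θ => pd (1,0) (pd (1,0) F) s θ) volume 0 (2*π))
            ((continuous_const.mul (cont_slice hF1.continuous s)).intervalIntegrable _ _ :
              IntervalIntegrable (fun θ => (Real.cos s / Real.sin s) * pd (1,0) F s θ) volume 0 (2*π)),
          intervalIntegral.integral_const_mul, intervalIntegral.integral_const_mul,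
          thetatheta_zero hF hper s]
      simp [Phi]
    rw [hsplit] at hmono
    have := mul_le_mul_of_nonneg_left hmono hsin.le
    have hne : Real.sin s ≠ 0 := ne_of_gt hsin
    calc Real.sin s * Phi (pd (1,0) (pd (1,0) F)) s + Real.cos s * Phi (pd (1,0) F) s
        = Real.sin s * (Phi (pd (1,0) (pd (1,0) F)) s
            + (Real.cos s / Real.sin s) * Phi (pd (1,0) F) s) := by
          field_simp
      _ ≤ Real.sin s * Phi F s := this
  -- the function W := sin · Ψ satisfies W r ≤ ∫_0^r sin Φ
  have hW : ∀ u, HasDerivAt (fun u => Real.sin u * Phi (pd (1,0) F) u)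
      (Real.cos u * Phi (pd (1,0) F) u + Real.sin u * Phi (pd (1,0) (pd (1,0) F)) u) u :=
    fun u => (Real.hasDerivAt_sin u).mul (hΨ u)
  have hsinΦcont : Continuous (fun t => Real.sin t * Phi F t) := Real.continuous_sin.mul hΦcont
  have hInt : ∀ u, HasDerivAt (fun u => ∫ t in (0:ℝ)..u, Real.sin t * Phi F t)
      (Real.sin u * Phi F u) u := by
    intro u
    exact intervalIntegral.integral_hasDerivAt_right (hsinΦcont.intervalIntegrable _ _)
      (hsinΦcont.stronglyMeasurableAtFilter _ _) hsinΦcont.continuousAt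
  set Z : ℝ → ℝ := fun u => (∫ t in (0:ℝ)..u, Real.sin t * Phi F t)
      - Real.sin u * Phi (pd (1,0) F) u with hZdef
  have hZ : ∀ u, HasDerivAt Z (Real.sin u * Phi F u
      - (Real.cos u * Phi (pd (1,0) F) u + Real.sin u * Phi (pd (1,0) (pd (1,0) F)) u)) u :=
    fun u => (hInt u).sub (hW u)
  have hZmono : MonotoneOn Z (Set.Icc 0 π) := by
    apply monotoneOn_of_deriv_nonneg (convex_Icc 0 π)
    · exact (Differentiable.continuous (fun u => (hZ u).differentiableAt)).continuousOn
    · exact fun x _ => ((hZ x).differentiableAt).differentiableWithinAt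
    · intro x hx
      rw [interior_Icc] at hx
      rw [(hZ x).deriv]
      have := hineq x hx
      linarith
  have hWle : ∀ r ∈ Set.Ioc (0:ℝ) (π/2),
      Real.sin r * Phi (pd (1,0) F) r ≤ ∫ t in (0:ℝ)..r, Real.sin t * Phi F t := by
    intro r hr
    have h0 : Z 0 = 0 := by simp [hZdef]
    have hr' : r ∈ Set.Icc (0:ℝ) π := ⟨hr.1.le, hr.2.trans (by linarith [Real.pi_pos])⟩
    have := hZmono (Set.left_mem_Icc.2 Real.pi_pos.le) hr' hr.1.le
    rw [h0] at this
    simp only [hZdef] at this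
    linarith
  -- Cauchy–Schwarz part
  intro r hr
  have h2π : (0:ℝ) < 2*π := by positivity
  have hrπ : r < π := hr.2.trans_lt (by linarith [Real.pi_pos])
  have hsinr : 0 < Real.sin r := Real.sin_pos_of_pos_of_lt_pi hr.1 hrπ
  set Q := Phi (fun s θ => (F s θ)^2) with hQdef
  have hQsm : ContDiff ℝ (⊤ : ℕ∞) (Function.uncurry (fun s θ => (F s θ)^2)) := by
    have : Function.uncurry (fun s θ => (F s θ)^2) = fun p => (Function.uncurry F p)^2 := rfl
    rw [this]; exact hF.pow 2
  have hQcont : Continuous Q := continuous_Phi hQsm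
  have hQnonneg : ∀ s, 0 ≤ Q s := fun s =>
    intervalIntegral.integral_nonneg h2π.le (fun θ _ => sq_nonneg _)
  -- pointwise Cauchy–Schwarz in θ
  have hΦle : ∀ s, Phi F s ≤ Real.sqrt (2*π) * Real.sqrt (Q s) := by
    intro s
    have hcs := cs_interval (f := fun _ : ℝ => (1:ℝ)) (g := F s) continuous_const
      (cont_slice hF.continuous s) h2π.le
    simp only [one_mul, one_pow] at hcs
    rw [intervalIntegral.integral_const] at hcs
    have hcs' : (Phi F s)^2 ≤ 2*π * Q s := by
      simpa [Phi, hQdef, smul_eq_mul] using hcs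
    calc Phi F s ≤ |Phi F s| := le_abs_self _
      _ = Real.sqrt ((Phi F s)^2) := (Real.sqrt_sq_eq_abs _).symm
      _ ≤ Real.sqrt (2*π * Q s) := Real.sqrt_le_sqrt hcs'
      _ = Real.sqrt (2*π) * Real.sqrt (Q s) := Real.sqrt_mul h2π.le _
  -- L² bound
  have hSphnonneg : 0 ≤ sphereIntegral (fun a b => (F a b)^2) := by
    rw [sphereIntegral]
    apply intervalIntegral.integral_nonneg Real.pi_pos.le
    intro u hu
    apply intervalIntegral.integral_nonneg h2π.le
    intro θ _
    exact mul_nonneg (sq_nonneg _) (Real.sin_nonneg_of_nonneg_of_le_pi hu.1 hu.2)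
  have hSph : sphereIntegral (fun a b => (F a b)^2) ≤ C^2 * (2*π) := by
    have h1 := pow_le_pow_left₀ (Real.sqrt_nonneg _) hL2 2
    have h1' : Real.sqrt (sphereIntegral fun a b => (F a b)^2) ^ 2
        ≤ (C * Real.sqrt (2*π))^2 := h1
    rw [Real.sq_sqrt hSphnonneg] at h1'
    calc sphereIntegral (fun a b => (F a b)^2) ≤ (C * Real.sqrt (2*π))^2 := h1'
      _ = C^2 * (2*π) := by rw [mul_pow, Real.sq_sqrt h2π.le]
  have hQint : (∫ s in (0:ℝ)..π, Q s * Real.sin s) = sphereIntegral (fun a b => (F a b)^2) := by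
    rw [sphereIntegral]
    apply intervalIntegral.integral_congr
    intro s _
    exact (intervalIntegral.integral_mul_const _ _).symm
  have hsinQcont : Continuous (fun s => Q s * Real.sin s) := hQcont.mul Real.continuous_sin
  have hQr : (∫ s in (0:ℝ)..r, Q s * Real.sin s) ≤ C^2 * (2*π) := by
    have hsplit := intervalIntegral.integral_add_adjacent_intervals (μ := volume)
      (hsinQcont.intervalIntegrable 0 r) (hsinQcont.intervalIntegrable r π)
    have h2 : 0 ≤ ∫ s in r..π, Q s * Real.sin s := by
      apply intervalIntegral.integral_nonneg hrπ.le
      intro s hs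
      exact mul_nonneg (hQnonneg s)
        (Real.sin_nonneg_of_nonneg_of_le_pi (hr.1.le.trans hs.1) hs.2)
    linarith [hQint, hSph, hsplit]
  -- the main Cauchy–Schwarz estimate in s
  set u : ℝ → ℝ := fun s => Real.sqrt (Real.sin s) with hudef
  set v : ℝ → ℝ := fun s => Real.sqrt (Real.sin s) * (Real.sqrt (2*π) * Real.sqrt (Q s))
    with hvdef
  have hu : Continuous u := Real.continuous_sqrt.comp Real.continuous_sin
  have hv : Continuous v := hu.mul (continuous_const.mul (Real.continuous_sqrt.comp hQcont))
  have hsin_nn : ∀ s ∈ Set.uIcc (0:ℝ) r, 0 ≤ Real.sin s := by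
    intro s hs
    rw [Set.uIcc_of_le hr.1.le] at hs
    exact Real.sin_nonneg_of_nonneg_of_le_pi hs.1 (hs.2.trans hrπ.le)
  have h1 : (∫ t in (0:ℝ)..r, Real.sin t * Phi F t)
      ≤ ∫ t in (0:ℝ)..r, Real.sin t * (Real.sqrt (2*π) * Real.sqrt (Q t)) := by
    apply intervalIntegral.integral_mono_on hr.1.le (hsinΦcont.intervalIntegrable _ _)
      ((Real.continuous_sin.mul
        (continuous_const.mul (Real.continuous_sqrt.comp hQcont))).intervalIntegrable _ _)
    intro t ht
    exact mul_le_mul_of_nonneg_left (hΦle t)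
      (hsin_nn t (by rw [Set.uIcc_of_le hr.1.le]; exact ht))
  have h2 : (∫ t in (0:ℝ)..r, Real.sin t * (Real.sqrt (2*π) * Real.sqrt (Q t)))
      = ∫ t in (0:ℝ)..r, u t * v t := by
    apply intervalIntegral.integral_congr
    intro t ht
    simp only [hudef, hvdef]
    nth_rewrite 1 [← Real.mul_self_sqrt (hsin_nn t ht)]
    ring
  have h3 := cs_interval hu hv hr.1.le
  have h4 : (∫ t in (0:ℝ)..r, (u t)^2) = 1 - Real.cos r := by
    have : (∫ t in (0:ℝ)..r, (u t)^2) = ∫ t in (0:ℝ)..r, Real.sin t := by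
      apply intervalIntegral.integral_congr
      intro t ht
      exact Real.sq_sqrt (hsin_nn t ht)
    rw [this, integral_sin, Real.cos_zero]
  have h5 : (∫ t in (0:ℝ)..r, (v t)^2) = 2*π * ∫ t in (0:ℝ)..r, Q t * Real.sin t := by
    have e : (∫ t in (0:ℝ)..r, (v t)^2) = ∫ t in (0:ℝ)..r, 2*π * (Q t * Real.sin t) := by
      apply intervalIntegral.integral_congr
      intro t ht
      simp only [hvdef]
      rw [mul_pow, mul_pow, Real.sq_sqrt (hsin_nn t ht), Real.sq_sqrt h2π.le,
        Real.sq_sqrt (hQnonneg t)]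
      ring
    rw [e, intervalIntegral.integral_const_mul]
  have h7 : 0 ≤ ∫ t in (0:ℝ)..r, u t * v t := by
    apply intervalIntegral.integral_nonneg hr.1.le
    intro t _
    exact mul_nonneg (Real.sqrt_nonneg _)
      (mul_nonneg (Real.sqrt_nonneg _) (mul_nonneg (Real.sqrt_nonneg _) (Real.sqrt_nonneg _)))
  have hcosr : 0 ≤ Real.cos r :=
    Real.cos_nonneg_of_mem_Icc ⟨by linarith [Real.pi_pos, hr.1], hr.2⟩
  have hcosr1 : Real.cos r ≤ 1 := Real.cos_le_one r
  have h8 : 1 - Real.cos r ≤ Real.sin r ^ 2 := by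
    nlinarith [Real.sin_sq_add_cos_sq r]
  have h9 : (∫ t in (0:ℝ)..r, u t * v t) ≤ 2*π*C * Real.sin r := by
    have hsq : (∫ t in (0:ℝ)..r, u t * v t)^2 ≤ (2*π*C * Real.sin r)^2 := by
      calc (∫ t in (0:ℝ)..r, u t * v t)^2
          ≤ (∫ t in (0:ℝ)..r, (u t)^2) * ∫ t in (0:ℝ)..r, (v t)^2 := h3
        _ ≤ (1 - Real.cos r) * (2*π * (C^2 * (2*π))) := by
            rw [h4, h5]
            apply mul_le_mul_of_nonneg_left _ (by linarith)
            exact mul_le_mul_of_nonneg_left hQr h2π.le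
        _ ≤ Real.sin r ^ 2 * (2*π * (C^2 * (2*π))) := by
            apply mul_le_mul_of_nonneg_right h8 (by positivity)
        _ = (2*π*C * Real.sin r)^2 := by ring
    nlinarith [h7, hsq, mul_nonneg (mul_nonneg h2π.le hC.le) hsinr.le]
  -- conclude
  have hchain : Real.sin r * Phi (pd (1,0) F) r ≤ Real.sin r * (2*π*C) := by
    have := hWle r hr
    rw [h2] at h1
    calc Real.sin r * Phi (pd (1,0) F) r ≤ ∫ t in (0:ℝ)..r, Real.sin t * Phi F t := this
      _ ≤ ∫ t in (0:ℝ)..r, u t * v t := h1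
      _ ≤ 2*π*C * Real.sin r := h9
      _ = Real.sin r * (2*π*C) := by ring
  exact le_of_mul_le_mul_left hchain hsinr

/-- ball average monotonicity. If `Δf ≤ f` and `‖f‖_{L²(S²)} ≤ C√(2π)` with
`C > 0`, then for every center `x ∈ S²` and all `0 < r < R ≤ π/2`,
`⨍_{B_R(x)} (f(y) − C d(y,x)) dvol(y) ≤ ⨍_{B_r(x)} (f(y) − C d(y,x)) dvol(y)`. -/
theorem ball_average_monotone (F : ℝ → ℝ → ℝ) (C : ℝ) (hC : 0 < C)
    (hsmooth : ContDiff ℝ (⊤ : ℕ∞) (Function.uncurry F))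
    (hper : ∀ r, Function.Periodic (F r) (2*π))
    (hpole₀ : ∀ θ₁ θ₂, F 0 θ₁ = F 0 θ₂)
    (hpoleπ : ∀ θ₁ θ₂, F π θ₁ = F π θ₂)
    (hlap : ∀ r ∈ Set.Ioo (0:ℝ) π, ∀ θ, sphLap F r θ ≤ F r θ)
    (hL2 : sphereL2 F ≤ C * Real.sqrt (2*π)) :
    ∀ r R : ℝ, 0 < r → r < R → R ≤ π/2 →
      ballAvg (fun s θ => F s θ - C * s) R ≤ ballAvg (fun s θ => F s θ - C * s) r := by
  intro r R hr hrR hRle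
  have h2π : (0:ℝ) < 2*π := by positivity
  have hπ : (0:ℝ) < π := Real.pi_pos
  set B : ℝ → ℝ := fun s => Phi F s - 2*π*C*s with hBdef
  have hB : ∀ s, HasDerivAt B (Phi (pd (1,0) F) s - 2*π*C) s := by
    intro s
    have h1 : HasDerivAt (fun s : ℝ => 2*π*C*s) (2*π*C) s := by
      simpa using (hasDerivAt_id s).const_mul (2*π*C)
    exact (hasDerivAt_param hsmooth s).sub h1
  have hBanti : AntitoneOn B (Set.Icc 0 (π/2)) := by
    apply antitoneOn_of_deriv_nonpos (convex_Icc _ _)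
    · exact (Differentiable.continuous (fun s => (hB s).differentiableAt)).continuousOn
    · exact fun x _ => ((hB x).differentiableAt).differentiableWithinAt
    · intro x hx
      rw [interior_Icc] at hx
      rw [(hB x).deriv]
      have := psi_le F C hC hsmooth hper hlap hL2 x ⟨hx.1, hx.2.le⟩
      linarith
  have hBcont : Continuous (fun s => B s * Real.sin s) :=
    ((continuous_Phi hsmooth).sub (continuous_const.mul continuous_id)).mul Real.continuous_sin
  have hball : ∀ ρ, ballIntegral (fun s θ => F s θ - C * s) ρ
      = ∫ s in (0:ℝ)..ρ, B s * Real.sin s := by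
    intro ρ
    rw [ballIntegral]
    apply intervalIntegral.integral_congr
    intro s _
    show (∫ θ in (0:ℝ)..(2*π), (F s θ - C * s) * Real.sin s) = B s * Real.sin s
    rw [intervalIntegral.integral_mul_const]
    congr 1
    rw [intervalIntegral.integral_sub
        ((cont_slice hsmooth.continuous s).intervalIntegrable _ _)
        (intervalIntegrable_const (μ := volume)),
      intervalIntegral.integral_const]
    simp only [hBdef, Phi, smul_eq_mul, sub_zero]
    ring
  -- memberships and cosine facts
  have hrmem : r ∈ Set.Icc (0:ℝ) (π/2) := ⟨hr.le, (hrR.le.trans hRle)⟩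
  have hRmem : R ∈ Set.Icc (0:ℝ) (π/2) := ⟨(hr.trans hrR).le, hRle⟩
  have hrpi : r ∈ Set.Icc (0:ℝ) π := ⟨hr.le, hrmem.2.trans (by linarith)⟩
  have hRpi : R ∈ Set.Icc (0:ℝ) π := ⟨hRmem.1, hRle.trans (by linarith)⟩
  have hcosr_lt : Real.cos r < 1 := by
    have := Real.strictAntiOn_cos (Set.mem_Icc.2 ⟨le_refl 0, hπ.le⟩) hrpi hr
    simpa using this
  have hcosR_lt : Real.cos R < Real.cos r := Real.strictAntiOn_cos hrpi hRpi hrR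
  have hcosR1 : Real.cos R < 1 := hcosR_lt.trans hcosr_lt
  have hsin_nn : ∀ s ∈ Set.Icc (0:ℝ) R, 0 ≤ Real.sin s := fun s hs =>
    Real.sin_nonneg_of_nonneg_of_le_pi hs.1 (hs.2.trans hRpi.2)
  -- lower bound on the inner integral
  have hlow : B r * (1 - Real.cos r) ≤ ∫ s in (0:ℝ)..r, B s * Real.sin s := by
    have he : (∫ s in (0:ℝ)..r, B r * Real.sin s) = B r * (1 - Real.cos r) := by
      rw [intervalIntegral.integral_const_mul, integral_sin]
      simp
    rw [← he]
    apply intervalIntegral.integral_mono_on hr.le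
      ((continuous_const.mul Real.continuous_sin).intervalIntegrable _ _)
      (hBcont.intervalIntegrable _ _)
    intro s hs
    have hmem : s ∈ Set.Icc (0:ℝ) (π/2) := ⟨hs.1, hs.2.trans hrmem.2⟩
    exact mul_le_mul_of_nonneg_right (hBanti hmem hrmem hs.2)
      (hsin_nn s ⟨hs.1, hs.2.trans hrR.le⟩)
  have hup : (∫ s in r..R, B s * Real.sin s) ≤ B r * (Real.cos r - Real.cos R) := by
    have he : (∫ s in r..R, B r * Real.sin s) = B r * (Real.cos r - Real.cos R) := by
      rw [intervalIntegral.integral_const_mul, integral_sin]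
    rw [← he]
    apply intervalIntegral.integral_mono_on hrR.le (hBcont.intervalIntegrable _ _)
      ((continuous_const.mul Real.continuous_sin).intervalIntegrable _ _)
    intro s hs
    have hmem : s ∈ Set.Icc (0:ℝ) (π/2) := ⟨hr.le.trans hs.1, hs.2.trans hRle⟩
    exact mul_le_mul_of_nonneg_right (hBanti hrmem hmem hs.1)
      (hsin_nn s ⟨hr.le.trans hs.1, hs.2⟩)
  have hsplit : (∫ s in (0:ℝ)..R, B s * Real.sin s)
      = (∫ s in (0:ℝ)..r, B s * Real.sin s) + ∫ s in r..R, B s * Real.sin s :=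
    (intervalIntegral.integral_add_adjacent_intervals (μ := volume)
      (hBcont.intervalIntegrable 0 r) (hBcont.intervalIntegrable r R)).symm
  rw [ballAvg, ballAvg, hball, hball, hsplit]
  rw [div_le_div_iff₀ (by nlinarith) (by nlinarith)]
  set Ir := ∫ s in (0:ℝ)..r, B s * Real.sin s
  set J := ∫ s in r..R, B s * Real.sin s
  have hA := mul_le_mul_of_nonneg_right hup (by linarith : (0:ℝ) ≤ 1 - Real.cos r)
  have hB2 := mul_le_mul_of_nonneg_right hlow (by linarith : (0:ℝ) ≤ Real.cos r - Real.cos R)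
  have hJI : (Ir + J) * (1 - Real.cos r) ≤ Ir * (1 - Real.cos R) := by nlinarith
  nlinarith [mul_le_mul_of_nonneg_left hJI h2π.le]
end

section
/- Let f be a smooth positive function on the round S² satisfying Δf ≤ f pointwise, where Δ is the Laplace–Beltrami operator (trace of the Hessian). Then ∫_{S²} |∇ ln f|² dvol ≤ Vol(S²) = 4π. -/
open Real MeasureTheory intervalIntegral

/-- The squared norm of the gradient on the round `S²` in geodesic polar coordinates:
`|∇u|² = (∂u/∂r)² + (1/sin²r)(∂u/∂θ)²`. -/
noncomputable def gradSq (u : ℝ → ℝ → ℝ) (r θ : ℝ) : ℝ :=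
  (deriv (fun s => u s θ) r)^2 + (1 / Real.sin r ^ 2) * (deriv (u r) θ)^2

section PartialDerivAux

open Function

/-- First partial derivative in the first variable. -/
noncomputable def pd1 (W : ℝ → ℝ → ℝ) : ℝ → ℝ → ℝ :=
  fun r θ => fderiv ℝ (uncurry W) (r, θ) (1, 0)

/-- First partial derivative in the second variable. -/
noncomputable def pd2 (W : ℝ → ℝ → ℝ) : ℝ → ℝ → ℝ :=
  fun r θ => fderiv ℝ (uncurry W) (r, θ) (0, 1)

lemma hasDerivAt_pd1 {W : ℝ → ℝ → ℝ} (hW : ContDiff ℝ (⊤ : ℕ∞) (uncurry W)) (r θ : ℝ) :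
    HasDerivAt (fun s => W s θ) (pd1 W r θ) r := by
  have h1 := (hW.differentiable (by simp) (r, θ)).hasFDerivAt
  have h2 : HasDerivAt (fun s : ℝ => (s, θ)) ((1 : ℝ), (0 : ℝ)) r :=
    (hasDerivAt_id r).prodMk (hasDerivAt_const r θ)
  exact h1.comp_hasDerivAt r h2

lemma hasDerivAt_pd2 {W : ℝ → ℝ → ℝ} (hW : ContDiff ℝ (⊤ : ℕ∞) (uncurry W)) (r θ : ℝ) :
    HasDerivAt (fun t => W r t) (pd2 W r θ) θ := by
  have h1 := (hW.differentiable (by simp) (r, θ)).hasFDerivAt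
  have h2 : HasDerivAt (fun t : ℝ => (r, t)) ((0 : ℝ), (1 : ℝ)) θ :=
    (hasDerivAt_const θ r).prodMk (hasDerivAt_id θ)
  exact h1.comp_hasDerivAt θ h2

lemma contDiff_pd1 {W : ℝ → ℝ → ℝ} (hW : ContDiff ℝ (⊤ : ℕ∞) (uncurry W)) :
    ContDiff ℝ (⊤ : ℕ∞) (uncurry (pd1 W)) := by
  have h : ContDiff ℝ (⊤ : ℕ∞) (fun p : ℝ × ℝ => fderiv ℝ (uncurry W) p ((1 : ℝ), (0 : ℝ))) :=
    (hW.fderiv_right (by simp)).clm_apply contDiff_const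
  exact h

lemma contDiff_pd2 {W : ℝ → ℝ → ℝ} (hW : ContDiff ℝ (⊤ : ℕ∞) (uncurry W)) :
    ContDiff ℝ (⊤ : ℕ∞) (uncurry (pd2 W)) := by
  have h : ContDiff ℝ (⊤ : ℕ∞) (fun p : ℝ × ℝ => fderiv ℝ (uncurry W) p ((0 : ℝ), (1 : ℝ))) :=
    (hW.fderiv_right (by simp)).clm_apply contDiff_const
  exact h

lemma cont_slice2 {W : ℝ → ℝ → ℝ} (hW : Continuous (uncurry W)) (r : ℝ) :
    Continuous (fun θ => W r θ) :=
  hW.comp (Continuous.prodMk_right r)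

lemma cont_slice1 {W : ℝ → ℝ → ℝ} (hW : Continuous (uncurry W)) (θ : ℝ) :
    Continuous (fun r => W r θ) :=
  hW.comp (continuous_id.prodMk continuous_const)

end PartialDerivAux

/-- If `f > 0` is smooth on `S²` with `Δf ≤ f`, then
`∫_{S²} |∇ ln f|² dvol ≤ Vol(S²) = 4π`. -/
theorem grad_log_L2_bound (F : ℝ → ℝ → ℝ)
    (hsmooth : ContDiff ℝ (⊤ : ℕ∞) (Function.uncurry F))
    (hper : ∀ r, Function.Periodic (F r) (2*π))
    (hpole₀ : ∀ θ₁ θ₂, F 0 θ₁ = F 0 θ₂)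
    (hpoleπ : ∀ θ₁ θ₂, F π θ₁ = F π θ₂)
    (hpos : ∀ r θ, 0 < F r θ)
    (hlap : ∀ r ∈ Set.Ioo (0:ℝ) π, ∀ θ, sphLap F r θ ≤ F r θ) :
    sphereIntegral (gradSq (fun r θ => Real.log (F r θ))) ≤ 4*π := by
  have hπ : (0:ℝ) < π := Real.pi_pos
  have h2π : (0:ℝ) ≤ 2*π := by positivity
  set u : ℝ → ℝ → ℝ := fun r θ => Real.log (F r θ) with hu_def
  have hFne : ∀ r θ, F r θ ≠ 0 := fun r θ => (hpos r θ).ne'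
  have hu : ContDiff ℝ (⊤ : ℕ∞) (Function.uncurry u) :=
    hsmooth.log (fun p => hFne p.1 p.2)
  -- partial derivatives of u and F
  set ur := pd1 u with hur_def
  set urr := pd1 (pd1 u) with hurr_def
  set uθ := pd2 u with huθ_def
  set uθθ := pd2 (pd2 u) with huθθ_def
  have hur : ContDiff ℝ (⊤ : ℕ∞) (Function.uncurry ur) := contDiff_pd1 hu
  have hurr : ContDiff ℝ (⊤ : ℕ∞) (Function.uncurry urr) := contDiff_pd1 hur
  have huθ : ContDiff ℝ (⊤ : ℕ∞) (Function.uncurry uθ) := contDiff_pd2 hu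
  have huθθ : ContDiff ℝ (⊤ : ℕ∞) (Function.uncurry uθθ) := contDiff_pd2 huθ
  set Fr := pd1 F with hFr_def
  set Frr := pd1 (pd1 F) with hFrr_def
  set Fθ := pd2 F with hFθ_def
  set Fθθ := pd2 (pd2 F) with hFθθ_def
  have hFr : ContDiff ℝ (⊤ : ℕ∞) (Function.uncurry Fr) := contDiff_pd1 hsmooth
  have hFrr : ContDiff ℝ (⊤ : ℕ∞) (Function.uncurry Frr) := contDiff_pd1 hFr
  have hFθ : ContDiff ℝ (⊤ : ℕ∞) (Function.uncurry Fθ) := contDiff_pd2 hsmooth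
  have hFθθ : ContDiff ℝ (⊤ : ℕ∞) (Function.uncurry Fθθ) := contDiff_pd2 hFθ
  -- expansion of sphLap in terms of pd's
  have hLapu : ∀ r θ, sphLap u r θ
      = urr r θ + (Real.cos r / Real.sin r) * ur r θ + (1 / Real.sin r ^ 2) * uθθ r θ := by
    intro r θ
    have e1 : (fun s => deriv (fun s' => u s' θ) s) = fun s => ur s θ := by
      funext s; exact (hasDerivAt_pd1 hu s θ).deriv
    have e2 : deriv (u r) = fun t => uθ r t := by
      funext t; exact (hasDerivAt_pd2 hu r t).deriv
    rw [sphLap, e1, e2, (hasDerivAt_pd1 hur r θ).deriv, (hasDerivAt_pd1 hu r θ).deriv,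
      (hasDerivAt_pd2 huθ r θ).deriv]
  have hLapF : ∀ r θ, sphLap F r θ
      = Frr r θ + (Real.cos r / Real.sin r) * Fr r θ + (1 / Real.sin r ^ 2) * Fθθ r θ := by
    intro r θ
    have e1 : (fun s => deriv (fun s' => F s' θ) s) = fun s => Fr s θ := by
      funext s; exact (hasDerivAt_pd1 hsmooth s θ).deriv
    have e2 : deriv (F r) = fun t => Fθ r t := by
      funext t; exact (hasDerivAt_pd2 hsmooth r t).deriv
    rw [sphLap, e1, e2, (hasDerivAt_pd1 hFr r θ).deriv, (hasDerivAt_pd1 hsmooth r θ).deriv,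
      (hasDerivAt_pd2 hFθ r θ).deriv]
  have hGrad : ∀ r θ, gradSq u r θ = (ur r θ)^2 + (1 / Real.sin r ^ 2) * (uθ r θ)^2 := by
    intro r θ
    rw [gradSq, (hasDerivAt_pd1 hu r θ).deriv]
    have e2 : deriv (u r) θ = uθ r θ := (hasDerivAt_pd2 hu r θ).deriv
    rw [e2]
  -- derivatives of u in terms of derivatives of F
  have hureq : ∀ r θ, ur r θ = Fr r θ / F r θ := by
    intro r θ
    exact (hasDerivAt_pd1 hu r θ).unique ((hasDerivAt_pd1 hsmooth r θ).log (hFne r θ))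
  have huθeq : ∀ r θ, uθ r θ = Fθ r θ / F r θ := by
    intro r θ
    exact (hasDerivAt_pd2 hu r θ).unique ((hasDerivAt_pd2 hsmooth r θ).log (hFne r θ))
  have hurreq : ∀ r θ, urr r θ = Frr r θ / F r θ - (Fr r θ / F r θ)^2 := by
    intro r θ
    have h1 := hasDerivAt_pd1 hur r θ
    have heq : (fun s => ur s θ) = fun s => Fr s θ / F s θ := funext fun s => hureq s θ
    rw [heq] at h1
    have h2 : HasDerivAt (fun s => Fr s θ / F s θ)
        ((Frr r θ * F r θ - Fr r θ * Fr r θ) / (F r θ)^2) r :=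
      (hasDerivAt_pd1 hFr r θ).div (hasDerivAt_pd1 hsmooth r θ) (hFne r θ)
    have h3 : urr r θ = (Frr r θ * F r θ - Fr r θ * Fr r θ) / (F r θ)^2 := h1.unique h2
    rw [h3]
    field_simp [hFne r θ]
  have huθθeq : ∀ r θ, uθθ r θ = Fθθ r θ / F r θ - (Fθ r θ / F r θ)^2 := by
    intro r θ
    have h1 := hasDerivAt_pd2 huθ r θ
    have heq : (fun t => uθ r t) = fun t => Fθ r t / F r t := funext fun t => huθeq r t
    rw [heq] at h1
    have h2 : HasDerivAt (fun t => Fθ r t / F r t)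
        ((Fθθ r θ * F r θ - Fθ r θ * Fθ r θ) / (F r θ)^2) θ :=
      (hasDerivAt_pd2 hFθ r θ).div (hasDerivAt_pd2 hsmooth r θ) (hFne r θ)
    have h3 : uθθ r θ = (Fθθ r θ * F r θ - Fθ r θ * Fθ r θ) / (F r θ)^2 := h1.unique h2
    rw [h3]
    field_simp [hFne r θ]
  -- key pointwise identity
  have hpt : ∀ r θ, gradSq u r θ = sphLap F r θ / F r θ - sphLap u r θ := by
    intro r θ
    rw [hGrad, hLapF, hLapu, hureq, huθeq, hurreq, huθθeq]
    have hF := hFne r θ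
    set c1 := Real.cos r / Real.sin r
    set c2 := 1 / Real.sin r ^ 2
    field_simp [hF]
    ring
  -- the function A = d/dr (sin r · u_r)
  set A : ℝ → ℝ → ℝ := fun r θ => Real.cos r * ur r θ + Real.sin r * urr r θ with hA_def
  have hA_cont : Continuous (Function.uncurry A) := by
    have : Function.uncurry A = fun p : ℝ × ℝ =>
        Real.cos p.1 * Function.uncurry ur p + Real.sin p.1 * Function.uncurry urr p := by
      funext p; rfl
    rw [this]
    exact ((Real.continuous_cos.comp continuous_fst).mul hur.continuous).add
      ((Real.continuous_sin.comp continuous_fst).mul hurr.continuous)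
  set IA : ℝ → ℝ := fun r => ∫ θ in (0:ℝ)..(2*π), A r θ with hIA_def
  have hIA_cont : Continuous IA :=
    intervalIntegral.continuous_parametric_intervalIntegral_of_continuous' hA_cont 0 (2*π)
  -- inner FTC: ∫_0^π A(r,θ) dr = 0 for every θ
  have hA_ftc : ∀ θ, (∫ r in (0:ℝ)..π, A r θ) = 0 := by
    intro θ
    have hd : ∀ s ∈ Set.uIcc (0:ℝ) π, HasDerivAt (fun s' => Real.sin s' * ur s' θ) (A s θ) s := by
      intro s _
      exact (Real.hasDerivAt_sin s).mul (hasDerivAt_pd1 hur s θ)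
    have hint : IntervalIntegrable (fun s => A s θ) volume 0 π :=
      (cont_slice1 hA_cont θ).intervalIntegrable 0 π
    rw [intervalIntegral.integral_eq_sub_of_hasDerivAt hd hint]
    simp [Real.sin_pi]
  -- Fubini: ∫_0^π IA = 0
  have hIA_zero : (∫ r in (0:ℝ)..π, IA r) = 0 := by
    have hInt : MeasureTheory.Integrable (Function.uncurry A)
        ((volume.restrict (Set.Ioc (0:ℝ) π)).prod (volume.restrict (Set.Ioc (0:ℝ) (2*π)))) := by
      rw [MeasureTheory.Measure.prod_restrict]
      have h1 : MeasureTheory.IntegrableOn (Function.uncurry A)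
          (Set.Icc (0:ℝ) π ×ˢ Set.Icc (0:ℝ) (2*π)) (volume.prod volume) :=
        hA_cont.continuousOn.integrableOn_compact (isCompact_Icc.prod isCompact_Icc)
      exact h1.mono_set (Set.prod_mono Set.Ioc_subset_Icc_self Set.Ioc_subset_Icc_self)
    have swap := MeasureTheory.integral_integral_swap hInt
    have e1 : (∫ r in (0:ℝ)..π, IA r)
        = ∫ r, ∫ θ, A r θ ∂(volume.restrict (Set.Ioc (0:ℝ) (2*π)))
            ∂(volume.restrict (Set.Ioc (0:ℝ) π)) := by
      rw [intervalIntegral.integral_of_le hπ.le]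
      apply MeasureTheory.setIntegral_congr_fun measurableSet_Ioc
      intro r _
      simp only [hIA_def]
      rw [intervalIntegral.integral_of_le h2π]
    rw [e1, swap]
    have : ∀ θ : ℝ, (∫ r, A r θ ∂(volume.restrict (Set.Ioc (0:ℝ) π))) = 0 := by
      intro θ
      have := hA_ftc θ
      rwa [intervalIntegral.integral_of_le hπ.le] at this
    simp only [this]
    simp
  -- ∫ uθθ dθ = 0 for every r, by periodicity
  have huθθ_zero : ∀ r, (∫ θ in (0:ℝ)..(2*π), uθθ r θ) = 0 := by
    intro r
    have hd : ∀ t ∈ Set.uIcc (0:ℝ) (2*π), HasDerivAt (fun t' => uθ r t') (uθθ r t) t := by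
      intro t _
      exact hasDerivAt_pd2 huθ r t
    have hint : IntervalIntegrable (fun t => uθθ r t) volume 0 (2*π) :=
      (cont_slice2 huθθ.continuous r).intervalIntegrable 0 (2*π)
    rw [intervalIntegral.integral_eq_sub_of_hasDerivAt hd hint]
    -- periodicity of uθ r
    have hperu : Function.Periodic (u r) (2*π) := (hper r).comp Real.log
    have he : ∀ t, uθ r t = deriv (u r) t := fun t => ((hasDerivAt_pd2 hu r t).deriv).symm
    have : uθ r (2*π) = uθ r 0 := by
      rw [he, he]
      have : deriv (u r) (0 + 2*π) = deriv (u r) 0 := by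
        rw [← deriv_comp_add_const]
        congr 1
        funext x
        exact hperu x
      simpa using this
    rw [this, sub_self]
  -- inner inequality for r ∈ (0, π)
  set B : ℝ → ℝ := fun r => ∫ θ in (0:ℝ)..(2*π), gradSq u r θ * Real.sin r with hB_def
  set C : ℝ → ℝ := fun r => 2*π*Real.sin r - IA r with hC_def
  have hinner : ∀ r ∈ Set.Ioo (0:ℝ) π, B r ≤ C r := by
    intro r hr
    have hsin : 0 < Real.sin r := Real.sin_pos_of_pos_of_lt_pi hr.1 hr.2
    -- pointwise inequality in θ
    have hptw : ∀ θ, gradSq u r θ * Real.sin r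
        ≤ Real.sin r - A r θ - (Real.sin r)⁻¹ * uθθ r θ := by
      intro θ
      have h1 : gradSq u r θ * Real.sin r
          = (sphLap F r θ / F r θ) * Real.sin r - sphLap u r θ * Real.sin r := by
        rw [hpt]; ring
      have h2 : sphLap u r θ * Real.sin r = A r θ + (Real.sin r)⁻¹ * uθθ r θ := by
        rw [hLapu, hA_def]
        field_simp
        ring
      have h3 : (sphLap F r θ / F r θ) * Real.sin r ≤ Real.sin r := by
        have : sphLap F r θ / F r θ ≤ 1 :=
          (div_le_one (hpos r θ)).mpr (hlap r hr θ)
        nlinarith [hsin]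
      rw [h1, h2]
      linarith
    -- continuity in θ of both sides
    have hcl : Continuous (fun θ => gradSq u r θ * Real.sin r) := by
      have : (fun θ => gradSq u r θ * Real.sin r)
          = fun θ => ((ur r θ)^2 + (1 / Real.sin r ^ 2) * (uθ r θ)^2) * Real.sin r := by
        funext θ; rw [hGrad]
      rw [this]
      exact (((cont_slice2 hur.continuous r).pow 2).add
        (continuous_const.mul ((cont_slice2 huθ.continuous r).pow 2))).mul continuous_const
    have hcr : Continuous (fun θ => Real.sin r - A r θ - (Real.sin r)⁻¹ * uθθ r θ) :=
      (continuous_const.sub (cont_slice2 hA_cont r)).sub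
        (continuous_const.mul (cont_slice2 huθθ.continuous r))
    have hmono : (∫ θ in (0:ℝ)..(2*π), gradSq u r θ * Real.sin r)
        ≤ ∫ θ in (0:ℝ)..(2*π), (Real.sin r - A r θ - (Real.sin r)⁻¹ * uθθ r θ) :=
      intervalIntegral.integral_mono_on h2π
        (hcl.intervalIntegrable 0 (2*π)) (hcr.intervalIntegrable 0 (2*π))
        (fun θ _ => hptw θ)
    have hre : (∫ θ in (0:ℝ)..(2*π), (Real.sin r - A r θ - (Real.sin r)⁻¹ * uθθ r θ))
        = 2*π*Real.sin r - IA r := by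
      rw [intervalIntegral.integral_sub (f := fun θ => Real.sin r - A r θ)
          (g := fun θ => (Real.sin r)⁻¹ * uθθ r θ)
          ((continuous_const.sub (cont_slice2 hA_cont r)).intervalIntegrable 0 (2*π))
          ((continuous_const.mul (cont_slice2 huθθ.continuous r)).intervalIntegrable 0 (2*π)),
        intervalIntegral.integral_sub (f := fun _ => Real.sin r) (g := fun θ => A r θ)
          ((continuous_const : Continuous fun _ : ℝ => Real.sin r).intervalIntegrable 0 (2*π))
          ((cont_slice2 hA_cont r).intervalIntegrable 0 (2*π)),
        intervalIntegral.integral_const_mul, huθθ_zero r, intervalIntegral.integral_const]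
      simp only [hIA_def, smul_eq_mul]
      ring
    calc B r ≤ _ := hmono
    _ = C r := by rw [hre]
  -- conclude
  have hgoal : sphereIntegral (gradSq u) = ∫ r in (0:ℝ)..π, B r := rfl
  rw [hgoal]
  by_cases hB : IntervalIntegrable B volume 0 π
  · have hC : IntervalIntegrable C volume 0 π :=
      ((continuous_const.mul Real.continuous_sin).sub hIA_cont).intervalIntegrable 0 π
    have hae : B ≤ᵐ[volume.restrict (Set.Icc (0:ℝ) π)] C := by
      have h1 : ∀ᵐ r ∂(volume.restrict (Set.Icc (0:ℝ) π)), r ∈ Set.Icc (0:ℝ) π :=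
        MeasureTheory.ae_restrict_mem measurableSet_Icc
      have hnull : (volume.restrict (Set.Icc (0:ℝ) π)) ({0, π} : Set ℝ) = 0 := by
        have h2 : (volume : Measure ℝ) ({0, π} : Set ℝ) = 0 :=
          (Set.toFinite ({0, π} : Set ℝ)).measure_zero volume
        exact le_antisymm (le_trans (MeasureTheory.Measure.restrict_apply_le _ _) h2.le)
          zero_le
      have h2 : ∀ᵐ r ∂(volume.restrict (Set.Icc (0:ℝ) π)), r ∉ ({0, π} : Set ℝ) := by
        rw [MeasureTheory.ae_iff]
        convert hnull using 2
        ext r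
        simp only [Set.mem_setOf_eq, Set.mem_insert_iff, Set.mem_singleton_iff, not_not]
      filter_upwards [h1, h2] with r hr1 hr2
      have hr0 : r ≠ 0 := fun h => hr2 (by simp [h])
      have hrπ : r ≠ π := fun h => hr2 (by simp [h])
      exact hinner r ⟨lt_of_le_of_ne hr1.1 (Ne.symm hr0), lt_of_le_of_ne hr1.2 hrπ⟩
    have hle := intervalIntegral.integral_mono_ae_restrict hπ.le hB hC hae
    have hCval : (∫ r in (0:ℝ)..π, C r) = 4*π := by
      rw [hC_def]
      beta_reduce
      rw [intervalIntegral.integral_sub (f := fun r => 2*π*Real.sin r) (g := IA)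
          ((continuous_const.mul Real.continuous_sin).intervalIntegrable 0 π)
          (hIA_cont.intervalIntegrable 0 π),
        hIA_zero, intervalIntegral.integral_const_mul, integral_sin]
      simp [Real.cos_pi]
      ring
    rw [hCval] at hle
    exact hle
  · rw [intervalIntegral.integral_undef hB]
    positivity
end
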